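/- Assume the Bernoulli convolution ν_β is absolutely continuous with density h_β. Let X={(x,y)∈ℝ²: x∈I_β, 0≤y≤h_β(x)}, X₀={(x,y)∈X: 0≤y≤(β/2)h_β(βx)}, X₁ the closure of X∖X₀, and define φ:X→X by φ(x,y)=(βx, 2y/β) for (x,y)∈X₀ and φ(x,y)=(βx−1, 2y/β−h_β(βx)) for (x,y)∈X₁. Then φ preserves two-dimensional Lebesgue measure λ² restricted to X: λ²(φ⁻¹(A))=λ²(A) for every Borel set A⊆X. -/

import Mathlib

open MeasureTheory Filter Topology
open scoped ENNReal Classical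

noncomputable section

/-- The symbolic space `{0,1}^ℕ`. -/
abbrev Sig : Type := ℕ → Bool

/-- The metric `d(a,b) = 2^{-sup{n : a₁⋯a_n = b₁⋯b_n}}` on `Sig`. -/
noncomputable instance : MetricSpace Sig := PiNat.metricSpace

instance (priority := 2000) : MeasurableSpace Sig := borel Sig

instance : BorelSpace Sig := ⟨rfl⟩

/-- The cylinder set `[a₁⋯a_n]` determined by a word `w = a₁⋯a_n`. -/
def cyl (w : List Bool) : Set Sig := {b | ∀ i : Fin w.length, b i.1 = w.get i}

/-- `π_β(a) = Σ_{i=1}^∞ a_i β^{-i}`. -/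
def piBeta (β : ℝ) (a : Sig) : ℝ := ∑' i : ℕ, (if a i then (1 : ℝ) else 0) * (β ^ (i + 1))⁻¹

/-- `I_β = [0, 1/(β-1)]`. -/
def Ibeta (β : ℝ) : Set ℝ := Set.Icc 0 (β - 1)⁻¹

/-- The set `E_β(x) = π_β⁻¹(x)` of β-expansions of `x`. -/
def Ebeta (β : ℝ) (x : ℝ) : Set Sig := piBeta β ⁻¹' {x}

/-- `T_i(x) = βx - i` for `i = 0,1`. -/
def Tmap (β : ℝ) (b : Bool) (x : ℝ) : ℝ := β * x - (if b then 1 else 0)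

/-- `T_{a₁⋯a_n} = T_{a_n} ∘ ⋯ ∘ T_{a₁}`. -/
def Tword (β : ℝ) (w : List Bool) (x : ℝ) : ℝ := w.foldl (fun y b => Tmap β b y) x

/-- `s_β = log(2/β)/log 2`. -/
def sBeta (β : ℝ) : ℝ := Real.log (2 / β) / Real.log 2

/-- `m` is the uniform `(1/2,1/2)` Bernoulli measure: every cylinder of depth `n`
has measure `2^{-n}`. -/
def bernoulliCylProp (m : Measure Sig) : Prop :=
  ∀ w : List Bool, m (cyl w) = (2 : ℝ≥0∞)⁻¹ ^ w.length

/-- `X = {(x,y) : x ∈ I_β, 0 ≤ y ≤ h_β(x)}`. -/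
def Xspace (β : ℝ) (h : ℝ → ℝ) : Set (ℝ × ℝ) :=
  {p | p.1 ∈ Ibeta β ∧ 0 ≤ p.2 ∧ p.2 ≤ h p.1}

/-- `X₀ = {(x,y) ∈ X : 0 ≤ y ≤ (β/2) h_β(βx)}`. -/
def X0 (β : ℝ) (h : ℝ → ℝ) : Set (ℝ × ℝ) :=
  {p | p ∈ Xspace β h ∧ p.2 ≤ (β / 2) * h (β * p.1)}

/-- `X₁` is the closure of `X \ X₀`. -/
def X1 (β : ℝ) (h : ℝ → ℝ) : Set (ℝ × ℝ) := closure (Xspace β h \ X0 β h)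

/-- The map `φ : X → X`, `φ(x,y) = (βx, 2y/β)` on `X₀` and
`φ(x,y) = (βx-1, 2y/β - h_β(βx))` on `X₁`. -/
def phiMap (β : ℝ) (h : ℝ → ℝ) (p : ℝ × ℝ) : ℝ × ℝ :=
  if p ∈ X0 β h then (β * p.1, 2 * p.2 / β)
  else (β * p.1 - 1, 2 * p.2 / β - h (β * p.1))


/-!
The Bernoulli measure is self-similar under prepending a digit, so `ν_β` is the self-similar
measure of the maps `x ↦ x / β`, `x ↦ (x + 1) / β`; comparing densities gives
`h(x) = (β/2) (h(βx) + h(βx - 1))` almost everywhere. Both branches of `φ` are skew products of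
affine maps with Jacobian `2`, so the preimage of `A` under either branch has measure
`λ²(A) / 2`. By the functional equation, almost every point that the first branch maps into `X`
lies in `X₀`, and almost every point that the second branch maps into `X` lies in `X \ X₀` (off
the null graph `y = (β/2) h(βx)`), so `λ²(X ∩ φ⁻¹ A) = λ²(A) / 2 + λ²(A) / 2`.
-/

open Set

theorem cyl_ofFn_eq_cylinder (x : Sig) (n : ℕ) :
    cyl (List.ofFn fun i : Fin n => x i) = PiNat.cylinder x n := by
  ext b
  simp only [cyl, mem_ofPred_eq, PiNat.mem_cylinder_iff, List.get_ofFn]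
  exact ⟨fun H i hi => H ⟨i, by simpa using hi⟩, fun H i => H i (by simpa using i.2)⟩

theorem isPiSystem_cylinders : IsPiSystem {s : Set Sig | ∃ x n, s = PiNat.cylinder x n} := by
  rintro _ ⟨x, n, rfl⟩ _ ⟨x', n', rfl⟩ ⟨b, hb, hb'⟩
  rw [PiNat.mem_cylinder_iff_eq] at hb hb'
  refine ⟨b, max n n', ?_⟩
  rw [← hb, ← hb']
  rcases le_total n n' with hle | hle
  · rw [max_eq_right hle, inter_eq_right.2 (PiNat.cylinder_anti b hle)]
  · rw [max_eq_left hle, inter_eq_left.2 (PiNat.cylinder_anti b hle)]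

theorem measurableSpace_sig_eq_generateFrom_cylinders :
    (inferInstance : MeasurableSpace Sig) =
      MeasurableSpace.generateFrom {s | ∃ x n, s = PiNat.cylinder x n} :=
  PiNat.isTopologicalBasis_cylinders _ |>.borel_eq_generateFrom

theorem measurableSet_cylinder (x : Sig) (n : ℕ) : MeasurableSet (PiNat.cylinder x n) :=
  (PiNat.isOpen_cylinder _ x n).measurableSet

theorem bernoulliCylProp.measure_cylinder {m : Measure Sig} (hm : bernoulliCylProp m)
    (x : Sig) (n : ℕ) : m (PiNat.cylinder x n) = 2⁻¹ ^ n := by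
  rw [← cyl_ofFn_eq_cylinder, hm, List.length_ofFn]

theorem bernoulliCylProp.isProbabilityMeasure {m : Measure Sig} (hm : bernoulliCylProp m) :
    IsProbabilityMeasure m :=
  ⟨by simpa [PiNat.cylinder_zero] using hm.measure_cylinder (fun _ => false) 0⟩

def Sig.cons (b : Bool) (a : Sig) : Sig
  | 0 => b
  | n + 1 => a n

theorem continuous_sigCons (b : Bool) : Continuous (Sig.cons b) :=
  continuous_pi fun n => by cases n <;> [exact continuous_const; exact continuous_apply _]

theorem preimage_sigCons_cylinder (b : Bool) (x : Sig) (n : ℕ) :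
    Sig.cons b ⁻¹' PiNat.cylinder x (n + 1) =
      if b = x 0 then PiNat.cylinder (fun i => x (i + 1)) n else ∅ := by
  ext a
  simp only [mem_preimage, PiNat.mem_cylinder_iff, Nat.forall_lt_succ_left]
  split_ifs with hb <;> simp [Sig.cons, hb]

theorem bernoulliCylProp.eq_half_add_half {m : Measure Sig} (hm : bernoulliCylProp m) :
    m = (2 : ℝ≥0∞)⁻¹ • m.map (Sig.cons false) + (2 : ℝ≥0∞)⁻¹ • m.map (Sig.cons true) := by
  have := hm.isProbabilityMeasure
  have hmap : ∀ b s, MeasurableSet s → m.map (Sig.cons b) s = m (Sig.cons b ⁻¹' s) :=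
    fun b _ hs => Measure.map_apply (continuous_sigCons b).measurable hs
  refine ext_of_generate_finite _ measurableSpace_sig_eq_generateFrom_cylinders
    isPiSystem_cylinders ?_ ?_
  · rintro _ ⟨x, n, rfl⟩
    rcases n with _ | n
    · simp [PiNat.cylinder_zero, hmap, ENNReal.inv_two_add_inv_two]
    · simp only [Measure.add_apply, Measure.smul_apply, smul_eq_mul,
        hmap _ _ (measurableSet_cylinder _ _), preimage_sigCons_cylinder,
        hm.measure_cylinder, pow_succ]
      cases x 0 <;> simp [hm.measure_cylinder, mul_comm]
  · simp [hmap, ENNReal.inv_two_add_inv_two]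

section piBeta

variable {β : ℝ}

theorem summable_inv_pow_succ (hβ : 1 < β) : Summable fun i : ℕ => (β ^ (i + 1))⁻¹ := by
  simp_rw [← inv_pow]
  exact (summable_geometric_of_lt_one (by positivity) (inv_lt_one_of_one_lt₀ hβ)).comp_injective
    (add_left_injective 1)

theorem norm_piBeta_term_le (hβ : 1 < β) (a : Sig) (i : ℕ) :
    ‖(if a i then (1 : ℝ) else 0) * (β ^ (i + 1))⁻¹‖ ≤ (β ^ (i + 1))⁻¹ := by
  have : 0 < β := by linarith
  rw [Real.norm_eq_abs, abs_mul, abs_of_pos (by positivity : 0 < (β ^ (i + 1))⁻¹)]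
  split_ifs <;> simp; positivity

theorem summable_piBeta (hβ : 1 < β) (a : Sig) :
    Summable fun i : ℕ => (if a i then (1 : ℝ) else 0) * (β ^ (i + 1))⁻¹ :=
  (summable_inv_pow_succ hβ).of_norm_bounded (norm_piBeta_term_le hβ a)

theorem continuous_piBeta (hβ : 1 < β) : Continuous (piBeta β) :=
  continuous_tsum
    (fun i => (continuous_of_discreteTopology (f := fun b : Bool =>
      (if b then (1 : ℝ) else 0) * (β ^ (i + 1))⁻¹)).comp (continuous_apply i))
    (summable_inv_pow_succ hβ) (fun i a => norm_piBeta_term_le hβ a i)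

theorem piBeta_cons (hβ : 1 < β) (b : Bool) (a : Sig) :
    piBeta β (Sig.cons b a) = ((if b then 1 else 0) + piBeta β a) / β := by
  have : β ≠ 0 := by positivity
  rw [piBeta, (summable_piBeta hβ _).tsum_eq_zero_add, piBeta, add_div, ← tsum_div_const]
  congr 1
  · cases b <;> simp [Sig.cons]
  · refine tsum_congr fun i => ?_
    rw [pow_succ _ (i + 1)]
    field_simp
    rfl

theorem map_piBeta_eq_half_add_half (hβ : 1 < β) {m : Measure Sig} (hm : bernoulliCylProp m) :
    m.map (piBeta β) = (2 : ℝ≥0∞)⁻¹ • (m.map (piBeta β)).map (fun x => x / β) +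
      (2 : ℝ≥0∞)⁻¹ • (m.map (piBeta β)).map (fun x => (x + 1) / β) := by
  have hπ := (continuous_piBeta hβ).measurable
  have hcons : ∀ b : Bool,
      piBeta β ∘ Sig.cons b = (fun x => (x + if b then 1 else 0) / β) ∘ piBeta β :=
    fun b => funext fun a => by simp [piBeta_cons hβ, add_comm]
  conv_lhs => rw [hm.eq_half_add_half]
  rw [Measure.map_add _ _ hπ, Measure.map_smul, Measure.map_smul,
    Measure.map_map hπ (continuous_sigCons _).measurable,
    Measure.map_map hπ (continuous_sigCons _).measurable, hcons, hcons,
    ← Measure.map_map (by fun_prop) hπ, ← Measure.map_map (by fun_prop) hπ]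
  simp

end piBeta

theorem map_volume_affine {a : ℝ} (ha : a ≠ 0) (c : ℝ) :
    (volume : Measure ℝ).map (fun x => a * x + c) = ENNReal.ofReal |a⁻¹| • volume := by
  rw [show (fun x : ℝ => a * x + c) = (· + c) ∘ (a * ·) from rfl,
    ← Measure.map_map (measurable_add_const c) (measurable_const_mul a),
    Real.map_volume_mul_left ha, Measure.map_smul, map_add_right_eq_self]

theorem map_withDensity_affine {a : ℝ} (ha : 0 < a) (c : ℝ) (f : ℝ → ℝ≥0∞) :
    (volume.withDensity f).map (fun x => (x + c) / a) =
      volume.withDensity fun x => ENNReal.ofReal a * f (a * x - c) := by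
  let T : ℝ → ℝ := fun x => a * x - c
  have hT : MeasurableEmbedding T :=
    ((Homeomorph.mulLeft₀ a ha.ne').trans (Homeomorph.subRight c)).measurableEmbedding
  have hvol : volume = (ENNReal.ofReal a • volume).map T := by
    rw [Measure.map_smul, show T = fun x => a * x + -c by funext x; ring,
      map_volume_affine ha.ne', smul_smul, ← ENNReal.ofReal_mul ha.le, abs_of_pos (inv_pos.2 ha),
      mul_inv_cancel₀ ha.ne', ENNReal.ofReal_one, one_smul]
  have hTs : ∀ s : Set ℝ, T ⁻¹' ((fun x => (x + c) / a) ⁻¹' s) = s := fun s => by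
    ext x; simp [T, ha.ne']
  ext s hs
  have hS : Measurable fun x : ℝ => (x + c) / a := by fun_prop
  rw [Measure.map_apply hS hs, withDensity_apply _ (hS hs), withDensity_apply _ hs]
  conv_lhs => rw [hvol]
  rw [hT.restrict_map, hT.lintegral_map, hTs, Measure.restrict_smul, lintegral_smul_measure,
    lintegral_const_mul' _ _ ENNReal.ofReal_ne_top, smul_eq_mul]

theorem ae_eq_of_withDensity_eq_half_add_half {β : ℝ} (hβ : 0 < β) {f : ℝ → ℝ≥0∞}
    (hf : Measurable f)
    (hss : volume.withDensity f =
      (2 : ℝ≥0∞)⁻¹ • (volume.withDensity f).map (fun x => x / β) +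
        (2 : ℝ≥0∞)⁻¹ • (volume.withDensity f).map (fun x => (x + 1) / β)) :
    f =ᵐ[volume] fun x => 2⁻¹ * ENNReal.ofReal β * (f (β * x) + f (β * x - 1)) := by
  have h0 := map_withDensity_affine hβ 0 f
  simp only [add_zero, sub_zero] at h0
  rw [h0, map_withDensity_affine hβ, ← withDensity_smul _ (by fun_prop),
    ← withDensity_smul _ (by fun_prop), ← withDensity_add_left (by fun_prop)] at hss
  refine ((withDensity_eq_iff_of_sigmaFinite hf.aemeasurable (by fun_prop)).1 hss).trans
    (Eventually.of_forall fun x => ?_)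
  simp only [Pi.add_apply, Pi.smul_apply, smul_eq_mul]
  ring

theorem bernoulliCylProp.ae_density_eq {β : ℝ} (hβ : 1 < β) {m : Measure Sig}
    (hm : bernoulliCylProp m) {h : ℝ → ℝ} (hmeas : Measurable h) (hnonneg : ∀ x, 0 ≤ h x)
    (hdens : m.map (piBeta β) = volume.withDensity fun x => ENNReal.ofReal (h x)) :
    ∀ᵐ x, h x = β / 2 * h (β * x) + β / 2 * h (β * x - 1) := by
  have hβ0 : 0 < β := by linarith
  have hae := ae_eq_of_withDensity_eq_half_add_half hβ0 hmeas.ennreal_ofReal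
    (hdens ▸ map_piBeta_eq_half_add_half hβ hm)
  filter_upwards [hae] with x hx
  have := hnonneg (β * x)
  have := hnonneg (β * x - 1)
  rw [← ENNReal.ofReal_add (hnonneg _) (hnonneg _), ← ENNReal.ofReal_ofNat 2,
    ← ENNReal.ofReal_inv_of_pos two_pos, ← ENNReal.ofReal_mul (by norm_num),
    ← ENNReal.ofReal_mul (by positivity),
    ENNReal.ofReal_eq_ofReal_iff (hnonneg x) (by positivity)] at hx
  rw [hx]
  ring

theorem measure_inter_piecewise_preimage {α γ : Type*} [MeasurableSpace α] [MeasurableSpace γ]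
    {μ : Measure α} {s t : Set α} [DecidablePred (· ∈ s)] {f g : α → γ} {A : Set γ}
    (hs : MeasurableSet s) (ht : MeasurableSet t) (hg : Measurable g) (hA : MeasurableSet A)
    (hfA : ∀ᵐ x ∂μ, f x ∈ A → x ∈ t ∩ s) (hgA : ∀ᵐ x ∂μ, g x ∈ A → x ∈ t \ s) :
    μ (t ∩ s.piecewise f g ⁻¹' A) = μ (f ⁻¹' A) + μ (g ⁻¹' A) := by
  have hsplit : t ∩ s.piecewise f g ⁻¹' A = (t ∩ s ∩ f ⁻¹' A) ∪ (t \ s ∩ g ⁻¹' A) := by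
    ext x; by_cases hx : x ∈ s <;> simp [hx]
  have hdisj : Disjoint (t ∩ s ∩ f ⁻¹' A) (t \ s ∩ g ⁻¹' A) :=
    disjoint_left.2 fun x h1 h2 => h2.1.2 h1.1.2
  rw [hsplit, measure_union hdisj ((ht.diff hs).inter (hg hA))]
  congr 1 <;> refine measure_congr ?_
  · filter_upwards [hfA] with x hx using propext ⟨fun h => h.2, fun h => ⟨hx h, h⟩⟩
  · filter_upwards [hgA] with x hx using propext ⟨fun h => h.2, fun h => ⟨hx h, h⟩⟩

theorem map_skewAffine_volume {a c : ℝ} (ha : a ≠ 0) (hc : c ≠ 0) (b : ℝ) {k : ℝ → ℝ}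
    (hk : Measurable k) :
    (volume : Measure (ℝ × ℝ)).map (fun p => (a * p.1 + b, c * p.2 + k p.1)) =
      ENNReal.ofReal |(a * c)⁻¹| • volume := by
  have hf : MeasurePreserving (fun x => a * x + b) volume (ENNReal.ofReal |a⁻¹| • volume) :=
    ⟨by fun_prop, map_volume_affine ha b⟩
  have hsp := hf.skew_product (g := fun x y => c * y + k x) (by fun_prop)
    (Eventually.of_forall fun x => map_volume_affine hc (k x))
  rw [Measure.volume_eq_prod, hsp.map_eq, Measure.prod_smul_left, Measure.prod_smul_right,
    smul_smul, ← ENNReal.ofReal_mul (abs_nonneg _), ← abs_mul, mul_inv]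

theorem Real.volume_graph_eq_zero {F : ℝ → ℝ} (hF : Measurable F) :
    volume {p : ℝ × ℝ | p.2 = F p.1} = 0 := by
  have hG : MeasurableSet {p : ℝ × ℝ | p.2 = F p.1} :=
    measurableSet_eq_fun measurable_snd (hF.comp measurable_fst)
  rw [Measure.volume_eq_prod, Measure.prod_apply hG]
  simp [preimage, measure_singleton]

section phi

variable {β : ℝ} {h : ℝ → ℝ}

def phi0 (β : ℝ) (p : ℝ × ℝ) : ℝ × ℝ := (β * p.1, 2 * p.2 / β)

def phi1 (β : ℝ) (h : ℝ → ℝ) (p : ℝ × ℝ) : ℝ × ℝ := (β * p.1 - 1, 2 * p.2 / β - h (β * p.1))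

theorem phiMap_eq_piecewise : phiMap β h = (X0 β h).piecewise (phi0 β) (phi1 β h) := rfl

theorem measurable_phi1 (hmeas : Measurable h) : Measurable (phi1 β h) := by
  unfold phi1; fun_prop

theorem ofReal_abs_inv_mul_two_div (hβ : β ≠ 0) : ENNReal.ofReal |(β * (2 / β))⁻¹| = 2⁻¹ := by
  rw [mul_div_cancel₀ _ hβ, abs_of_pos (by norm_num), ENNReal.ofReal_inv_of_pos two_pos,
    ENNReal.ofReal_ofNat]

theorem volume_preimage_phi0 (hβ : 0 < β) {A : Set (ℝ × ℝ)} (hA : MeasurableSet A) :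
    volume (phi0 β ⁻¹' A) = 2⁻¹ * volume A := by
  have : phi0 β = fun p => (β * p.1 + 0, 2 / β * p.2 + 0) := by
    funext p; simp [phi0]; ring
  rw [← Measure.map_apply (by unfold phi0; fun_prop) hA, this,
    map_skewAffine_volume (k := fun _ => 0) hβ.ne' (by positivity) 0 measurable_const,
    ofReal_abs_inv_mul_two_div hβ.ne', Measure.smul_apply, smul_eq_mul]

theorem volume_preimage_phi1 (hβ : 0 < β) (hmeas : Measurable h) {A : Set (ℝ × ℝ)}
    (hA : MeasurableSet A) : volume (phi1 β h ⁻¹' A) = 2⁻¹ * volume A := by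
  have : phi1 β h = fun p => (β * p.1 + -1, 2 / β * p.2 + -h (β * p.1)) := by
    funext p; simp only [phi1]; ring_nf
  rw [← Measure.map_apply (measurable_phi1 hmeas) hA, this,
    map_skewAffine_volume (k := fun x => -h (β * x)) hβ.ne' (by positivity) _ (by fun_prop),
    ofReal_abs_inv_mul_two_div hβ.ne', Measure.smul_apply, smul_eq_mul]

theorem measurableSet_Xspace (hmeas : Measurable h) : MeasurableSet (Xspace β h) :=
  (measurable_fst measurableSet_Icc).inter <|
    (measurableSet_le measurable_const measurable_snd).inter
      (measurableSet_le measurable_snd (hmeas.comp measurable_fst))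

theorem measurableSet_X0 (hmeas : Measurable h) : MeasurableSet (X0 β h) :=
  (measurableSet_Xspace hmeas).inter <| measurableSet_le measurable_snd (by fun_prop)

theorem mem_X0_of_phi0_mem (hβ : 1 < β) (hnonneg : ∀ x, 0 ≤ h x) {p : ℝ × ℝ}
    (hp : h p.1 = β / 2 * h (β * p.1) + β / 2 * h (β * p.1 - 1))
    (hX : phi0 β p ∈ Xspace β h) : p ∈ Xspace β h ∩ X0 β h := by
  obtain ⟨⟨hx0, hx1⟩, hy0, hy1⟩ := hX
  simp only [phi0] at hx0 hx1 hy0 hy1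
  have hβ0 : 0 < β := by linarith
  have hx : 0 ≤ p.1 := nonneg_of_mul_nonneg_right hx0 hβ0
  have hy : 0 ≤ p.2 ∧ p.2 ≤ β / 2 * h (β * p.1) := by
    rw [le_div_iff₀ hβ0] at hy0; rw [div_le_iff₀ hβ0] at hy1
    constructor <;> linarith
  have hh := hnonneg (β * p.1 - 1)
  have hpX : p ∈ Xspace β h := ⟨⟨hx, by nlinarith⟩, hy.1, by nlinarith⟩
  exact ⟨hpX, hpX, hy.2⟩

theorem mem_Xspace_diff_X0_of_phi1_mem (hβ : 1 < β) (hnonneg : ∀ x, 0 ≤ h x) {p : ℝ × ℝ}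
    (hp : h p.1 = β / 2 * h (β * p.1) + β / 2 * h (β * p.1 - 1))
    (hne : p.2 ≠ β / 2 * h (β * p.1)) (hX : phi1 β h p ∈ Xspace β h) :
    p ∈ Xspace β h \ X0 β h := by
  obtain ⟨⟨hx0, hx1⟩, hy0, hy1⟩ := hX
  simp only [phi1] at hx0 hx1 hy0 hy1
  have hβ0 : 0 < β := by linarith
  have hu : (β - 1) * (β - 1)⁻¹ = 1 := mul_inv_cancel₀ (by linarith)
  have hy : β / 2 * h (β * p.1) ≤ p.2 ∧ p.2 ≤ h p.1 := by
    rw [sub_nonneg, le_div_iff₀ hβ0] at hy0; rw [sub_le_iff_le_add, div_le_iff₀ hβ0] at hy1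
    constructor <;> nlinarith
  have hh := hnonneg (β * p.1)
  refine ⟨⟨⟨by nlinarith, by nlinarith⟩, by nlinarith, hy.2⟩, fun h0 => hne ?_⟩
  exact le_antisymm h0.2 hy.1

end phi

theorem stmt0_general (β : ℝ) (hβ : β ∈ Set.Ioo (1 : ℝ) 2)
    (m : Measure Sig) (hm : bernoulliCylProp m)
    (h : ℝ → ℝ) (hmeas : Measurable h) (hnonneg : ∀ x, 0 ≤ h x)
    (hdens : Measure.map (piBeta β) m
      = volume.withDensity fun x => ENNReal.ofReal (h x)) :
    ∀ A : Set (ℝ × ℝ), MeasurableSet A → A ⊆ Xspace β h →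
      volume (Xspace β h ∩ phiMap β h ⁻¹' A) = volume A := by
  intro A hA hAX
  have hβ0 : 0 < β := by linarith [hβ.1]
  have hfun : ∀ᵐ p : ℝ × ℝ, h p.1 = β / 2 * h (β * p.1) + β / 2 * h (β * p.1 - 1) := by
    rw [Measure.volume_eq_prod]
    exact Measure.quasiMeasurePreserving_fst.ae (hm.ae_density_eq hβ.1 hmeas hnonneg hdens)
  have hgraph : ∀ᵐ p : ℝ × ℝ, p.2 ≠ β / 2 * h (β * p.1) :=
    measure_eq_zero_iff_ae_notMem.1 <|
      Real.volume_graph_eq_zero (F := fun x => β / 2 * h (β * x)) (by fun_prop)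
  rw [phiMap_eq_piecewise, measure_inter_piecewise_preimage (measurableSet_X0 hmeas)
    (measurableSet_Xspace hmeas) (measurable_phi1 hmeas) hA, volume_preimage_phi0 hβ0 hA,
    volume_preimage_phi1 hβ0 hmeas hA, ← add_mul, ENNReal.inv_two_add_inv_two, one_mul]
  · filter_upwards [hfun] with p hp hpA
    exact mem_X0_of_phi0_mem hβ.1 hnonneg hp (hAX hpA)
  · filter_upwards [hfun, hgraph] with p hp hne hpA
    exact mem_Xspace_diff_X0_of_phi1_mem hβ.1 hnonneg hp hne (hAX hpA)

/-- If the Bernoulli convolution `ν_β` is absolutely continuous with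
density `h_β`, then `φ` preserves two-dimensional Lebesgue measure restricted to `X`:
`λ²(φ⁻¹(A)) = λ²(A)` for every Borel set `A ⊆ X`. -/
theorem stmt0 (β : ℝ) (hβ : β ∈ Set.Ioo (1 : ℝ) 2)
    (m : Measure Sig) (hm : bernoulliCylProp m)
    (h : ℝ → ℝ) (hmeas : Measurable h) (hnonneg : ∀ x, 0 ≤ h x)
    (hsupp : ∀ x ∉ Ibeta β, h x = 0)
    (hdens : Measure.map (piBeta β) m
      = volume.withDensity fun x => ENNReal.ofReal (h x)) :
    ∀ A : Set (ℝ × ℝ), MeasurableSet A → A ⊆ Xspace β h →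
      volume (Xspace β h ∩ phiMap β h ⁻¹' A) = volume A :=
  stmt0_general β hβ m hm h hmeas hnonneg hdens
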